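/- arXiv:2106.15450 — 6 statements merged into one kernel-verified Lean document; each statement's English description precedes it below -/
import Mathlib

section
/- Let B_K, B_{S*}, B_{S'} be formal power series over ℚ with zero constant term satisfying the system: B_K = X + (1 + B_{S'})·exp(B_{S*}) − B_{S*} − B_{S'} − 1; B_{S*} = X + exp(B_K) + B_{S'}·exp(B_{S*}) − B_K − B_{S'} − 1; B_{S'} = X + exp(B_K) + exp(B_{S*}) − B_K − B_{S*} − 2. Then B_K = B_{S*}, B_{S'} = 1 − exp(−B_K), and B_K satisfies B_K = X + 2·exp(B_K) + exp(−B_K) − B_K − 3. -/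
/-- Substitution of a power series `F` (intended: with zero constant term) into the
exponential power series `exp(X) = Σ_{n≥0} X^n/n!`.  When `constantCoeff F = 0`,
`coeff n (F ^ k) = 0` for `k > n`, so the finite sum below is the genuine
coefficient of `X^n` in `exp ∘ F`. -/
noncomputable def expComp (F : PowerSeries ℚ) : PowerSeries ℚ :=
  PowerSeries.mk fun n => ∑ k ∈ Finset.range (n + 1),
    PowerSeries.coeff k (PowerSeries.exp ℚ) * PowerSeries.coeff n (F ^ k)

open PowerSeries Finset

lemma coeff_expComp (F : PowerSeries ℚ) (n : ℕ) :
    coeff n (expComp F) =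
    ∑ k ∈ range (n + 1), ((k.factorial : ℚ))⁻¹ * coeff n (F ^ k) := by
  rw [expComp, coeff_mk]
  refine Finset.sum_congr rfl fun k _ => ?_
  rw [coeff_exp]
  norm_num

lemma coeff_pow_zero_of_lt {F : PowerSeries ℚ} (h : constantCoeff F = 0)
    {n k : ℕ} (hk : n < k) : coeff n (F ^ k) = 0 := by
  have hX : (X : PowerSeries ℚ) ^ k ∣ F ^ k :=
    pow_dvd_pow_of_dvd (X_dvd_iff.mpr h) k
  exact (X_pow_dvd_iff.mp hX) n hk

lemma coeff_mul_pow_zero_of_lt {F G : PowerSeries ℚ} (hF : constantCoeff F = 0)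
    (hG : constantCoeff G = 0) {n j i : ℕ} (h : n < j + i) :
    coeff n (F ^ j * G ^ i) = 0 := by
  have hX : (X : PowerSeries ℚ) ^ (j + i) ∣ F ^ j * G ^ i := by
    rw [pow_add]
    exact mul_dvd_mul (pow_dvd_pow_of_dvd (X_dvd_iff.mpr hF) j)
      (pow_dvd_pow_of_dvd (X_dvd_iff.mpr hG) i)
  exact (X_pow_dvd_iff.mp hX) n h

lemma coeff_expComp_of_le {F : PowerSeries ℚ} (hF : constantCoeff F = 0)
    {a N : ℕ} (h : a ≤ N) :
    coeff a (expComp F) = ∑ k ∈ range (N + 1), ((k.factorial : ℚ))⁻¹ * coeff a (F ^ k) := by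
  rw [coeff_expComp]
  refine Finset.sum_subset (by intro x hx; simp only [mem_range] at *; omega) ?_
  intro k hk hk'
  simp only [mem_range] at hk hk'
  rw [coeff_pow_zero_of_lt hF (by omega), mul_zero]

lemma constantCoeff_expComp (F : PowerSeries ℚ) : constantCoeff (expComp F) = 1 := by
  have := coeff_expComp F 0
  rw [coeff_zero_eq_constantCoeff] at this
  simpa using this

lemma expComp_zero : expComp (0 : PowerSeries ℚ) = 1 := by
  ext n
  rw [coeff_expComp]
  rcases n with _ | n
  · simp
  · rw [Finset.sum_eq_zero, coeff_one]
    · simp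
    intro k hk
    rcases k with _ | k
    · simp
    · simp [zero_pow]

lemma expComp_mul {F G : PowerSeries ℚ} (hF : constantCoeff F = 0)
    (hG : constantCoeff G = 0) :
    expComp F * expComp G = expComp (F + G) := by
  ext n
  -- replace factors by polynomial partial sums
  set P : PowerSeries ℚ := ∑ j ∈ range (n + 1), C ((j.factorial : ℚ))⁻¹ * F ^ j with hP
  set Q : PowerSeries ℚ := ∑ i ∈ range (n + 1), C ((i.factorial : ℚ))⁻¹ * G ^ i with hQ
  have hPc : ∀ a ≤ n, coeff a (expComp F) = coeff a P := by
    intro a ha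
    rw [coeff_expComp_of_le hF ha, hP, map_sum]
    exact Finset.sum_congr rfl fun j _ => by rw [coeff_C_mul]
  have hQc : ∀ a ≤ n, coeff a (expComp G) = coeff a Q := by
    intro a ha
    rw [coeff_expComp_of_le hG ha, hQ, map_sum]
    exact Finset.sum_congr rfl fun j _ => by rw [coeff_C_mul]
  have h1 : coeff n (expComp F * expComp G) = coeff n (P * Q) := by
    rw [coeff_mul, coeff_mul]
    refine Finset.sum_congr rfl fun p hp => ?_
    rw [Finset.HasAntidiagonal.mem_antidiagonal] at hp
    rw [hPc p.1 (by omega), hQc p.2 (by omega)]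
  rw [h1]
  -- expand P * Q
  have h2 : coeff n (P * Q) =
      ∑ p ∈ range (n + 1) ×ˢ range (n + 1),
        ((p.1.factorial : ℚ))⁻¹ * ((p.2.factorial : ℚ))⁻¹ * coeff n (F ^ p.1 * G ^ p.2) := by
    rw [hP, hQ, Finset.sum_mul_sum, ← Finset.sum_product', map_sum]
    refine Finset.sum_congr rfl fun p _ => ?_
    rw [show C ((p.1.factorial : ℚ))⁻¹ * F ^ p.1 * (C ((p.2.factorial : ℚ))⁻¹ * G ^ p.2)
        = C ((p.1.factorial : ℚ))⁻¹ * (C ((p.2.factorial : ℚ))⁻¹ * (F ^ p.1 * G ^ p.2)) by ring,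
      coeff_C_mul, coeff_C_mul, mul_assoc]
  rw [h2]
  -- restrict LHS to the triangle
  set T : Finset (ℕ × ℕ) := (range (n + 1) ×ˢ range (n + 1)).filter (fun p => p.1 + p.2 ≤ n) with hT
  have h3 : ∑ p ∈ range (n + 1) ×ˢ range (n + 1),
        ((p.1.factorial : ℚ))⁻¹ * ((p.2.factorial : ℚ))⁻¹ * coeff n (F ^ p.1 * G ^ p.2)
      = ∑ p ∈ T, ((p.1.factorial : ℚ))⁻¹ * ((p.2.factorial : ℚ))⁻¹ * coeff n (F ^ p.1 * G ^ p.2) := by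
    refine (Finset.sum_subset (Finset.filter_subset _ _) ?_).symm
    intro p hp hp'
    have : ¬ (p.1 + p.2 ≤ n) := by
      intro hle
      exact hp' (Finset.mem_filter.mpr ⟨hp, hle⟩)
    rw [coeff_mul_pow_zero_of_lt hF hG (by omega), mul_zero]
  rw [h3]
  -- compute RHS
  rw [coeff_expComp]
  have h4 : ∀ k ∈ range (n + 1), ((k.factorial : ℚ))⁻¹ * coeff n ((F + G) ^ k)
      = ∑ j ∈ range (k + 1), ((k.factorial : ℚ))⁻¹ * (k.choose j : ℚ) * coeff n (F ^ j * G ^ (k - j)) := by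
    intro k _
    rw [add_pow, map_sum, Finset.mul_sum]
    refine Finset.sum_congr rfl fun j _ => ?_
    rw [show F ^ j * G ^ (k - j) * (k.choose j : PowerSeries ℚ)
        = C ((k.choose j : ℚ)) * (F ^ j * G ^ (k - j)) by
      rw [← map_natCast (C (R := ℚ)) (k.choose j)]; ring, coeff_C_mul]
    ring
  rw [Finset.sum_congr rfl h4, Finset.sum_sigma']
  -- reindex the sigma sum onto T
  refine (Finset.sum_nbij' (fun p => (p.2, p.1 - p.2)) (fun p => ⟨p.1 + p.2, p.1⟩) ?_ ?_ ?_ ?_ ?_).symm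
  · intro p hp
    simp only [Finset.mem_sigma, mem_range] at hp
    simp only [hT, Finset.mem_filter, Finset.mem_product, mem_range]
    omega
  · intro p hp
    simp only [hT, Finset.mem_filter, Finset.mem_product, mem_range] at hp
    simp only [Finset.mem_sigma, mem_range]
    omega
  · intro p hp
    simp only [Finset.mem_sigma, mem_range] at hp
    obtain ⟨k, j⟩ := p
    simp only at hp ⊢
    have h : j + (k - j) = k := by omega
    rw [h]
  · intro p hp
    simp only [hT, Finset.mem_filter, Finset.mem_product, mem_range] at hp
    obtain ⟨a, b⟩ := p
    simp only [Prod.mk.injEq] at hp ⊢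
    exact ⟨trivial, by omega⟩
  · intro p hp
    simp only [Finset.mem_sigma, mem_range] at hp
    have hj : p.2 ≤ p.1 := by omega
    have hfac : ((p.1.factorial : ℚ))⁻¹ * (p.1.choose p.2 : ℚ)
        = ((p.2.factorial : ℚ))⁻¹ * (((p.1 - p.2).factorial : ℚ))⁻¹ := by
      have h := Nat.choose_mul_factorial_mul_factorial hj
      have h2 : (p.1.choose p.2 : ℚ) * (p.2.factorial : ℚ) * ((p.1 - p.2).factorial : ℚ)
          = (p.1.factorial : ℚ) := by exact_mod_cast congrArg (Nat.cast : ℕ → ℚ) h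
      have f1 : (p.1.factorial : ℚ) ≠ 0 := Nat.cast_ne_zero.mpr (Nat.factorial_ne_zero _)
      have f2 : (p.2.factorial : ℚ) ≠ 0 := Nat.cast_ne_zero.mpr (Nat.factorial_ne_zero _)
      have f3 : (((p.1 - p.2).factorial : ℚ)) ≠ 0 := Nat.cast_ne_zero.mpr (Nat.factorial_ne_zero _)
      field_simp
      linarith [h2]
    rw [hfac]

lemma coeff_pow_congr {F G : PowerSeries ℚ} (hF : constantCoeff F = 0)
    (hG : constantCoeff G = 0) {n : ℕ}
    (h : ∀ m < n, coeff m F = coeff m G) {k : ℕ} (hk : k ≠ 1) :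
    coeff n (F ^ k) = coeff n (G ^ k) := by
  rcases Nat.eq_zero_or_pos k with rfl | hk0
  · simp
  have hk2 : 2 ≤ k := by omega
  rw [coeff_pow, coeff_pow]
  refine Finset.sum_congr rfl fun l hl => ?_
  rw [Finset.mem_finsuppAntidiag] at hl
  by_cases hcase : ∀ i ∈ range k, l i < n
  · exact Finset.prod_congr rfl fun i hi => h (l i) (hcase i hi)
  · push_neg at hcase
    obtain ⟨i, hi, hin⟩ := hcase
    -- l i = n, so there is j ≠ i with l j = 0
    set j : ℕ := if i = 0 then 1 else 0 with hj
    have hji : j ≠ i := by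
      rcases eq_or_ne i 0 with h0 | h0
      · simp [hj, h0]
      · simp only [hj, if_neg h0]
        omega
    have hjmem : j ∈ range k := by simp [hj]; split <;> omega
    have hlj : l j = 0 := by
      have hsub : ({j, i} : Finset ℕ) ⊆ range k := by
        intro x hx; simp only [Finset.mem_insert, Finset.mem_singleton] at hx
        rcases hx with rfl | rfl; exacts [hjmem, hi]
      have := Finset.sum_le_sum_of_subset_of_nonneg hsub (fun x _ _ => Nat.zero_le (l x))
      rw [Finset.sum_pair hji, hl.1] at this
      omega
    rw [Finset.prod_eq_zero hjmem, Finset.prod_eq_zero hjmem]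
    · rw [hlj, coeff_zero_eq_constantCoeff, hG]
    · rw [hlj, coeff_zero_eq_constantCoeff, hF]

lemma expComp_inj {F G : PowerSeries ℚ} (hF : constantCoeff F = 0)
    (hG : constantCoeff G = 0) (h : expComp F = expComp G) : F = G := by
  ext n
  induction n using Nat.strong_induction_on with
  | _ n ih =>
    rcases n with _ | n
    · rw [coeff_zero_eq_constantCoeff, hF, hG]
    have hc := congrArg (coeff (n + 1)) h
    rw [coeff_expComp, coeff_expComp] at hc
    have h1mem : (1 : ℕ) ∈ range (n + 2) := by simp
    rw [← Finset.add_sum_erase _ _ h1mem, ← Finset.add_sum_erase _ _ h1mem] at hc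
    have hrest : ∑ k ∈ (range (n + 2)).erase 1,
          ((k.factorial : ℚ))⁻¹ * coeff (n + 1) (F ^ k)
        = ∑ k ∈ (range (n + 2)).erase 1,
          ((k.factorial : ℚ))⁻¹ * coeff (n + 1) (G ^ k) := by
      refine Finset.sum_congr rfl fun k hk => ?_
      rw [coeff_pow_congr hF hG (fun m hm => ih m hm) (Finset.ne_of_mem_erase hk)]
    rw [hrest] at hc
    have := add_right_cancel hc
    simpa using this


/-- the generating-function system for rooted labeled connected bushes,
classified by the type of the root node of the split decomposition tree, implies
`B_K = B_{S*}`, `B_{S'} = 1 − exp(−B_K)` and `B_K = X + 2·exp(B_K) + exp(−B_K) − B_K − 3`. -/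
theorem bush_system_reduction (BK BS BS' : PowerSeries ℚ)
    (hBK0 : PowerSeries.constantCoeff BK = 0)
    (hBS0 : PowerSeries.constantCoeff BS = 0)
    (hBS'0 : PowerSeries.constantCoeff BS' = 0)
    (h1 : BK = PowerSeries.X + (1 + BS') * expComp BS - BS - BS' - 1)
    (h2 : BS = PowerSeries.X + expComp BK + BS' * expComp BS - BK - BS' - 1)
    (h3 : BS' = PowerSeries.X + expComp BK + expComp BS - BK - BS - 2) :
    BK = BS ∧ BS' = 1 - expComp (-BK) ∧
      BK = PowerSeries.X + 2 * expComp BK + expComp (-BK) - BK - 3 := by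
  have hES : expComp BS = expComp BK := by linear_combination h2 - h1
  have hKS : BK = BS := (expComp_inj hBS0 hBK0 hES).symm
  have hunit : (1 - BS') * expComp BS = 1 := by linear_combination h2 - h3
  rw [hES] at hunit
  have hneg : expComp (-BK) * expComp BK = 1 := by
    rw [expComp_mul (by simp [hBK0]) hBK0, neg_add_cancel, expComp_zero]
  have hEne : expComp BK ≠ 0 := by
    intro h0
    have := constantCoeff_expComp BK
    rw [h0] at this
    simp at this
  have hBS' : 1 - BS' = expComp (-BK) := mul_right_cancel₀ hEne (hunit.trans hneg.symm)
  refine ⟨hKS, by linear_combination -hBS', ?_⟩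
  linear_combination h3 + hKS + hES + hBS'
end

section
/- Let C_T, C_{D*}, C_{D'} be formal power series over ℚ with zero constant term satisfying the system: C_T = X + C_{D*}²·(1 − C_{D*})⁻¹ + C_{D'}·((1 − C_{D*})⁻² − 1); C_{D*} = X + C_T²·(1 − C_T)⁻¹ + C_{D'}·((1 − C_{D*})⁻² − 1); C_{D'} = X + C_{D*}²·(1 − C_{D*})⁻¹ + C_T²·(1 − C_T)⁻¹. Then C_T = C_{D*} and C_T³ − 4·C_T² + (1 + X)·C_T − X = 0. -/
/-- the generating-function system for rooted connected analytic chord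
diagrams (cordages), classified by the type (T, D*, D') of the pulley at the root node,
implies `C_T = C_{D*}` and `C_T³ − 4·C_T² + (1+X)·C_T − X = 0`. -/
theorem cordage_system_reduction (CT CD CD' : PowerSeries ℚ)
    (hCT0 : PowerSeries.constantCoeff CT = 0)
    (hCD0 : PowerSeries.constantCoeff CD = 0)
    (hCD'0 : PowerSeries.constantCoeff CD' = 0)
    (h1 : CT = PowerSeries.X + CD ^ 2 * (1 - CD)⁻¹ + CD' * (((1 - CD) ^ 2)⁻¹ - 1))
    (h2 : CD = PowerSeries.X + CT ^ 2 * (1 - CT)⁻¹ + CD' * (((1 - CD) ^ 2)⁻¹ - 1))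
    (h3 : CD' = PowerSeries.X + CD ^ 2 * (1 - CD)⁻¹ + CT ^ 2 * (1 - CT)⁻¹) :
    CT = CD ∧ CT ^ 3 - 4 * CT ^ 2 + (1 + PowerSeries.X) * CT - PowerSeries.X = 0 := by
  have hct : PowerSeries.constantCoeff (1 - CT) ≠ 0 := by
    simp [hCT0]
  have hcd : PowerSeries.constantCoeff (1 - CD) ≠ 0 := by
    simp [hCD0]
  have hcd2 : PowerSeries.constantCoeff ((1 - CD) ^ 2) ≠ 0 := by
    simp [hCD0]
  have ha : (1 - CT) * (1 - CT)⁻¹ = 1 := PowerSeries.mul_inv_cancel _ hct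
  have hb : (1 - CD) * (1 - CD)⁻¹ = 1 := PowerSeries.mul_inv_cancel _ hcd
  have hc : (1 - CD) ^ 2 * ((1 - CD) ^ 2)⁻¹ = 1 := PowerSeries.mul_inv_cancel _ hcd2
  have hTD : CT = CD := by
    linear_combination (1 - CT) * (1 - CD) * (h1 - h2) + CD ^ 2 * (1 - CT) * hb
      - CT ^ 2 * (1 - CD) * ha
  refine ⟨hTD, ?_⟩
  subst hTD
  linear_combination (1 - CT) ^ 3 * h1 + (2 * CT - CT ^ 2) * (1 - CT) * h3
    + (CD' - CT * CD') * hc + (CT ^ 2 + 2 * CT ^ 3 - CT ^ 4) * hb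
end

section
/- Let C_T be a formal power series over ℚ with zero constant term satisfying C_T³ − 4·C_T² + (1 + X)·C_T − X = 0, and set C = C_T·(1 − C_T)⁻¹. Then C = X + 2·X·C + (X + 2)·C² + 2·C³. -/
/-- if `C_T` has zero constant term and satisfies
`C_T³ − 4·C_T² + (1+X)·C_T − X = 0`, then `C = C_T·(1 − C_T)⁻¹` satisfies
`C = X + 2·X·C + (X+2)·C² + 2·C³`. -/
theorem cordage_to_C (CT C : PowerSeries ℚ)
    (hCT0 : PowerSeries.constantCoeff CT = 0)
    (hCT : CT ^ 3 - 4 * CT ^ 2 + (1 + PowerSeries.X) * CT - PowerSeries.X = 0)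
    (hC : C = CT * (1 - CT)⁻¹) :
    C = PowerSeries.X + 2 * PowerSeries.X * C + (PowerSeries.X + 2) * C ^ 2
        + 2 * C ^ 3 := by
  have hs0 : PowerSeries.constantCoeff (1 - CT) ≠ 0 := by
    simp [hCT0]
  have hu : (1 - CT) * (1 - CT)⁻¹ = 1 := PowerSeries.mul_inv_cancel _ hs0
  have hCs : C * (1 - CT) = CT := by
    rw [hC]; rw [mul_assoc, mul_comm ((1 - CT)⁻¹), hu, mul_one]
  have hsne : (1 - CT) ≠ 0 := fun h => hs0 (by rw [h]; simp)
  have key : C * (1 - CT) ^ 3 =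
      (PowerSeries.X + 2 * PowerSeries.X * C + (PowerSeries.X + 2) * C ^ 2
        + 2 * C ^ 3) * (1 - CT) ^ 3 := by
    linear_combination hCT +
      ((1 - CT) ^ 2 - 2 * PowerSeries.X * (1 - CT) ^ 2
        - (PowerSeries.X + 2) * (1 - CT) * (C * (1 - CT) + CT)
        - 2 * (C ^ 2 * (1 - CT) ^ 2 + C * (1 - CT) * CT + CT ^ 2)) * hCs
  exact mul_right_cancel₀ (pow_ne_zero 3 hsne) key
end

section
/- Let C be the unique formal power series over ℚ with zero constant term satisfying C = X + 2·X·C + (X + 2)·C² + 2·C³. Then for every n ≥ 1, the coefficient of X^n in C equals (1/n)·Σ_{k=0}^{n−1} binom(n−1+k, n−1)·binom(2n+k, n−1−k)·2^k. -/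
open PowerSeries Finset

lemma ps_dvd (m : ℕ) :
    (PowerSeries.X : PowerSeries ℚ) ^ (m+1) ∣
      1 - (1 - PowerSeries.X) ^ (m+1) *
        ∑ j ∈ Finset.range (m+1), PowerSeries.C ((m + j).choose m : ℚ) * PowerSeries.X ^ j := by
  set S : PowerSeries ℚ :=
    ∑ j ∈ Finset.range (m+1), PowerSeries.C ((m + j).choose m : ℚ) * PowerSeries.X ^ j with hS
  set I : PowerSeries ℚ := (PowerSeries.invOneSubPow ℚ (m+1)).val with hI
  have hIinv : (1 - PowerSeries.X) ^ (m+1) * I = 1 := by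
    rw [hI, ← PowerSeries.invOneSubPow_inv_eq_one_sub_pow]
    exact (PowerSeries.invOneSubPow ℚ (m+1)).inv_val
  have hfac : 1 - (1 - PowerSeries.X) ^ (m+1) * S = (1 - PowerSeries.X) ^ (m+1) * (I - S) := by
    rw [mul_sub, hIinv]
  rw [hfac]
  apply Dvd.dvd.mul_left
  rw [PowerSeries.X_pow_dvd_iff]
  intro d hd
  rw [map_sub]
  have h1 : PowerSeries.coeff d I = ((m + d).choose m : ℚ) := by
    rw [hI, PowerSeries.invOneSubPow_val_succ_eq_mk_add_choose, PowerSeries.coeff_mk]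
  have h2 : PowerSeries.coeff d S = ((m + d).choose m : ℚ) := by
    rw [hS, map_sum]
    rw [Finset.sum_eq_single d]
    · rw [PowerSeries.coeff_C_mul, PowerSeries.coeff_X_pow]
      simp
    · intro b _ hb
      rw [PowerSeries.coeff_C_mul, PowerSeries.coeff_X_pow]
      simp [Ne.symm hb]
    · intro hds
      exact absurd (Finset.mem_range.mpr hd) hds
  rw [h1, h2, sub_self]

lemma poly_dvd (m : ℕ) :
    (Polynomial.X : Polynomial ℚ) ^ (m+1) ∣
      1 - (1 - Polynomial.X) ^ (m+1) *
        ∑ j ∈ Finset.range (m+1), Polynomial.C ((m + j).choose m : ℚ) * Polynomial.X ^ j := by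
  rw [Polynomial.X_pow_dvd_iff]
  intro d hd
  have h := ps_dvd m
  rw [PowerSeries.X_pow_dvd_iff] at h
  have h2 := h d hd
  rw [← h2, ← Polynomial.coeff_coe]
  congr 1
  rw [← Polynomial.coeToPowerSeries.ringHom_apply, map_sub, map_mul, map_pow, map_sub, map_one, map_sum]
  simp only [Polynomial.coeToPowerSeries.ringHom_apply, Polynomial.coe_X]
  congr 1
  congr 1
  apply Finset.sum_congr rfl
  intro j _
  rw [← Polynomial.coeToPowerSeries.ringHom_apply, map_mul, map_pow]
  simp only [Polynomial.coeToPowerSeries.ringHom_apply, Polynomial.coe_X, Polynomial.coe_C]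

/-- the explicit Lagrange-inversion formula for the coefficients of the
ordinary generating function `C` of rooted connected analytic chord diagrams:
`C_n = (1/n)·Σ_{k=0}^{n−1} binom(n−1+k, n−1)·binom(2n+k, n−1−k)·2^k`. -/
theorem C_coeff_formula (C : PowerSeries ℚ)
    (hC0 : PowerSeries.constantCoeff C = 0)
    (hC : C = PowerSeries.X + 2 * PowerSeries.X * C + (PowerSeries.X + 2) * C ^ 2
        + 2 * C ^ 3) :
    ∀ n : ℕ, 1 ≤ n →
      PowerSeries.coeff n C =
        (1 / (n : ℚ)) * ∑ k ∈ Finset.range n,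
          (Nat.choose (n - 1 + k) (n - 1) : ℚ) *
            (Nat.choose (2 * n + k) (n - 1 - k) : ℚ) * 2 ^ k := by
  intro n hn
  obtain ⟨m, rfl⟩ : ∃ m, n = m + 1 := ⟨n - 1, (Nat.succ_pred_eq_of_pos hn).symm⟩
  -- basic units
  set E : PowerSeries ℚ := (1 + C) ^ 2 with hEdef
  set D : PowerSeries ℚ := 1 - 2 * C - 2 * C ^ 2 with hDdef
  have hE0 : PowerSeries.constantCoeff E = 1 := by
    rw [hEdef]; simp [hC0]
  have hD0 : PowerSeries.constantCoeff D = 1 := by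
    rw [hDdef]; simp [hC0]
  have hE : E * E⁻¹ = 1 := PowerSeries.mul_inv_cancel _ (by rw [hE0]; exact one_ne_zero)
  have hD : D * D⁻¹ = 1 := PowerSeries.mul_inv_cancel _ (by rw [hD0]; exact one_ne_zero)
  have hCD : C * D = PowerSeries.X * E := by
    rw [hDdef, hEdef]; linear_combination hC
  set w : PowerSeries ℚ := D * E⁻¹ with hwdef
  have hCw : C * w = PowerSeries.X := by
    rw [hwdef, ← mul_assoc, hCD, mul_assoc, hE, mul_one]
  have hwE : w * E = D := by
    rw [hwdef, mul_assoc, mul_comm (E⁻¹) E, hE, mul_one]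
  have hXC : PowerSeries.X ∣ C := ⟨E * D⁻¹, by
    calc C = C * (D * D⁻¹) := by rw [hD, mul_one]
    _ = (C * D) * D⁻¹ := by ring
    _ = PowerSeries.X * (E * D⁻¹) := by rw [hCD]; ring⟩
  -- derivative facts
  set dC : PowerSeries ℚ := PowerSeries.derivative ℚ C with hdCdef
  set dw : PowerSeries ℚ := PowerSeries.derivative ℚ w with hdwdef
  have hLeib : dC * w + C * dw = 1 := by
    have h1 := congrArg (PowerSeries.derivative ℚ) hCw
    rw [Derivation.leibniz, PowerSeries.derivative_X] at h1
    rw [← h1, hdCdef, hdwdef, smul_eq_mul, smul_eq_mul]; ring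
  have hconst : PowerSeries.constantCoeff (dC * w) = 1 := by
    have h := congrArg (PowerSeries.constantCoeff) hLeib
    simpa [hC0] using h
  have Lkill : ∀ a : ℕ, PowerSeries.coeff a (dC * w ^ (a + 1)) =
      if a = 0 then 1 else 0 := by
    intro a
    match a with
    | 0 => simpa [PowerSeries.coeff_zero_eq_constantCoeff] using hconst
    | (q+1) =>
      have h1 : dC * w ^ (q + 2) = w ^ (q + 1) - PowerSeries.X * (dw * w ^ q) := by
        have h0 : dC * w = 1 - C * dw := by linear_combination hLeib
        calc dC * w ^ (q + 2) = (dC * w) * w ^ (q + 1) := by ring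
        _ = (1 - C * dw) * w ^ (q + 1) := by rw [h0]
        _ = w ^ (q + 1) - (C * w) * (dw * w ^ q) := by ring
        _ = w ^ (q + 1) - PowerSeries.X * (dw * w ^ q) := by rw [hCw]
      have h2 : PowerSeries.coeff q (dw * w ^ q) =
          PowerSeries.coeff (q + 1) (w ^ (q + 1)) := by
        have hp : PowerSeries.derivative ℚ (w ^ (q + 1)) = (q + 1 : ℕ) • (w ^ q * dw) := by
          have := Derivation.leibniz_pow (PowerSeries.derivative ℚ) w (q + 1)
          simpa [smul_eq_mul, hdwdef] using this
        have hc := congrArg (PowerSeries.coeff q) hp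
        rw [PowerSeries.coeff_derivative, map_nsmul, nsmul_eq_mul, mul_comm (w ^ q) dw] at hc
        push_cast at hc
        have hq : ((q : ℚ) + 1) ≠ 0 := by positivity
        apply mul_left_cancel₀ hq
        linear_combination -hc
      rw [h1, map_sub, PowerSeries.coeff_succ_X_mul, h2]
      simp
  have Lcore : ∀ t : ℕ, PowerSeries.coeff m (dC * C ^ t * w ^ (m + 1)) =
      if t = m then 1 else 0 := by
    intro t
    rcases le_or_gt t m with h | h
    · have hsplit : w ^ (m + 1) = w ^ t * w ^ (m - t + 1) := by
        rw [← pow_add]; congr 1; omega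
      have heq : dC * C ^ t * w ^ (m + 1) =
          PowerSeries.X ^ t * (dC * w ^ (m - t + 1)) := by
        calc dC * C ^ t * w ^ (m + 1)
            = (C ^ t * w ^ t) * (dC * w ^ (m - t + 1)) := by rw [hsplit]; ring
          _ = PowerSeries.X ^ t * (dC * w ^ (m - t + 1)) := by
              rw [← mul_pow, hCw]
      rw [heq, PowerSeries.coeff_X_pow_mul', if_pos h, Lkill (m - t)]
      rcases eq_or_ne t m with rfl | hne
      · simp
      · have h1 : m - t ≠ 0 := by omega
        simp [h1, hne]
    · have hsplit : C ^ t = C ^ (m + 1) * C ^ (t - (m + 1)) := by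
        rw [← pow_add]; congr 1; omega
      have heq : dC * C ^ t * w ^ (m + 1) =
          PowerSeries.X ^ (m + 1) * (dC * C ^ (t - (m + 1))) := by
        calc dC * C ^ t * w ^ (m + 1)
            = (C ^ (m + 1) * w ^ (m + 1)) * (dC * C ^ (t - (m + 1))) := by rw [hsplit]; ring
          _ = _ := by rw [← mul_pow, hCw]
      rw [heq, PowerSeries.coeff_X_pow_mul']
      have h1 : ¬ (m + 1 ≤ m) := by omega
      have h2 : t ≠ m := by omega
      simp [h1, h2]
  -- substitution of the polynomial identity
  set y : PowerSeries ℚ := 2 * C + 2 * C ^ 2 with hydef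
  have hXy : PowerSeries.X ∣ y := by
    obtain ⟨c, hc⟩ := hXC
    exact ⟨2 * c + 2 * (c * C), by rw [hydef, hc]; ring⟩
  obtain ⟨r, hr⟩ := poly_dvd m
  set sy : PowerSeries ℚ :=
    ∑ j ∈ Finset.range (m + 1), PowerSeries.C ((m + j).choose m : ℚ) * y ^ j with hsydef
  set ry : PowerSeries ℚ := Polynomial.aeval y r with hrydef
  have key : 1 - (1 - y) ^ (m + 1) * sy = y ^ (m + 1) * ry := by
    have h := congrArg (Polynomial.aeval y) hr
    simpa [map_sub, map_one, map_mul, map_pow, map_sum, Polynomial.aeval_X, Polynomial.aeval_C,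
      hsydef, hrydef, ← PowerSeries.C_eq_algebraMap] using h
  have hdec : PowerSeries.coeff m dC
      = PowerSeries.coeff m (dC * ((1 - y) ^ (m + 1) * sy))
        + PowerSeries.coeff m (dC * (y ^ (m + 1) * ry)) := by
    rw [← map_add]
    congr 1
    linear_combination dC * key
  have h2nd : PowerSeries.coeff m (dC * (y ^ (m + 1) * ry)) = 0 := by
    obtain ⟨c, hc⟩ := hXy
    have heq : dC * (y ^ (m + 1) * ry) =
        PowerSeries.X ^ (m + 1) * (c ^ (m + 1) * ry * dC) := by rw [hc]; ring
    rw [heq, PowerSeries.coeff_X_pow_mul']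
    simp
  -- expansion of the first term
  have hDw : (1 : PowerSeries ℚ) - y = w * (1 + C) ^ 2 := by
    rw [← hEdef, hwE, hDdef, hydef]; ring
  have h1st : PowerSeries.coeff m (dC * ((1 - y) ^ (m + 1) * sy))
      = ∑ j ∈ Finset.range (m + 1),
          ((m + j).choose m : ℚ) * 2 ^ j * ((2 * (m + 1) + j).choose (m - j) : ℚ) := by
    have hterm : ∀ j ∈ Finset.range (m + 1),
        dC * ((1 - y) ^ (m + 1) * (PowerSeries.C ((m + j).choose m : ℚ) * y ^ j))
        = ∑ i ∈ Finset.range (2 * (m + 1) + j + 1),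
            PowerSeries.C (((m + j).choose m : ℚ) * 2 ^ j * ((2 * (m + 1) + j).choose i : ℚ))
              * (dC * C ^ (i + j) * w ^ (m + 1)) := by
      intro j hj
      have hbin : ((1 : PowerSeries ℚ) + C) ^ (2 * (m + 1) + j)
          = ∑ i ∈ Finset.range (2 * (m + 1) + j + 1),
              C ^ i * ((2 * (m + 1) + j).choose i : PowerSeries ℚ) := by
        rw [add_comm (1 : PowerSeries ℚ) C, add_pow]
        simp
      have hyj : y ^ j = 2 ^ j * (C ^ j * (1 + C) ^ j) := by
        rw [hydef]
        rw [← mul_pow, ← mul_pow]; congr 1; ring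
      have hstep : dC * ((1 - y) ^ (m + 1) * (PowerSeries.C ((m + j).choose m : ℚ) * y ^ j))
          = PowerSeries.C ((m + j).choose m : ℚ) * 2 ^ j
              * ((1 + C) ^ (2 * (m + 1) + j) * (dC * C ^ j * w ^ (m + 1))) := by
        rw [hDw, hyj, mul_pow w ((1 + C) ^ 2), ← pow_mul]
        rw [show (1 + C) ^ (2 * (m + 1) + j) = (1 + C) ^ (2 * (m + 1)) * (1 + C) ^ j from by
          rw [← pow_add]]
        ring
      rw [hstep, hbin, Finset.sum_mul, Finset.mul_sum]
      apply Finset.sum_congr rfl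
      intro i _
      have hCpow : C ^ (i + j) = C ^ i * C ^ j := by rw [pow_add]
      rw [hCpow]
      simp only [map_mul, map_pow, map_natCast, map_ofNat]
      ring
    calc PowerSeries.coeff m (dC * ((1 - y) ^ (m + 1) * sy))
        = ∑ j ∈ Finset.range (m + 1), ∑ i ∈ Finset.range (2 * (m + 1) + j + 1),
            (((m + j).choose m : ℚ) * 2 ^ j * ((2 * (m + 1) + j).choose i : ℚ))
              * (if i + j = m then 1 else 0) := by
          rw [hsydef, Finset.mul_sum, Finset.mul_sum]
          rw [map_sum]
          apply Finset.sum_congr rfl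
          intro j hj
          rw [show dC * ((1 - y) ^ (m + 1) * (PowerSeries.C ((m + j).choose m : ℚ) * y ^ j))
              = dC * ((1 - y) ^ (m + 1) * (PowerSeries.C ((m + j).choose m : ℚ) * y ^ j))
              from rfl]
          rw [hterm j hj, map_sum]
          apply Finset.sum_congr rfl
          intro i _
          rw [PowerSeries.coeff_C_mul, Lcore (i + j)]
      _ = ∑ j ∈ Finset.range (m + 1),
            ((m + j).choose m : ℚ) * 2 ^ j * ((2 * (m + 1) + j).choose (m - j) : ℚ) := by
          apply Finset.sum_congr rfl
          intro j hj
          have hjm : j ≤ m := by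
            have := Finset.mem_range.mp hj; omega
          rw [Finset.sum_eq_single (m - j)]
          · rw [if_pos (by omega : m - j + j = m), mul_one]
          · intro b _ hb
            rw [if_neg (by omega : ¬ b + j = m), mul_zero]
          · intro hmem
            exact absurd (Finset.mem_range.mpr (by omega)) hmem
  -- conclusion
  have hder : PowerSeries.coeff m dC = PowerSeries.coeff (m + 1) C * (m + 1) := by
    rw [hdCdef, PowerSeries.coeff_derivative]
  have hfinal : PowerSeries.coeff (m + 1) C * (m + 1)
      = ∑ j ∈ Finset.range (m + 1),
          ((m + j).choose m : ℚ) * 2 ^ j * ((2 * (m + 1) + j).choose (m - j) : ℚ) := by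
    rw [← hder, hdec, h2nd, add_zero, h1st]
  have hsum : (∑ j ∈ Finset.range (m + 1),
        ((m + j).choose m : ℚ) * 2 ^ j * ((2 * (m + 1) + j).choose (m - j) : ℚ))
      = ∑ k ∈ Finset.range (m + 1),
        ((m + k).choose m : ℚ) * ((2 * (m + 1) + k).choose (m - k) : ℚ) * 2 ^ k :=
    Finset.sum_congr rfl (fun k _ => by ring)
  rw [hsum] at hfinal
  simp only [Nat.add_sub_cancel]
  have hm1 : ((m + 1 : ℕ) : ℚ) ≠ 0 := Nat.cast_ne_zero.mpr (Nat.succ_ne_zero m)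
  rw [one_div, inv_mul_eq_div, eq_div_iff hm1]
  rw [show ((m + 1 : ℕ) : ℚ) = (m : ℚ) + 1 from by push_cast; ring]
  exact hfinal
end

section
/- Let C be a formal power series over ℚ with zero constant term satisfying C = X + 2·X·C + (X + 2)·C² + 2·C³, and set L = X + X·C. Then 2·L³ + (X² − 4·X)·L² + X²·L + X³ = 0. -/
/-- if `C` has zero constant term and satisfies
`C = X + 2·X·C + (X+2)·C² + 2·C³`, then `L = X + X·C`, the ordinary generating function
of connected analytic linear chord diagrams, satisfies
`2·L³ + (X² − 4·X)·L² + X²·L + X³ = 0`. -/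
theorem L_equation (C L : PowerSeries ℚ)
    (hC0 : PowerSeries.constantCoeff C = 0)
    (hC : C = PowerSeries.X + 2 * PowerSeries.X * C + (PowerSeries.X + 2) * C ^ 2
        + 2 * C ^ 3)
    (hL : L = PowerSeries.X + PowerSeries.X * C) :
    2 * L ^ 3 + (PowerSeries.X ^ 2 - 4 * PowerSeries.X) * L ^ 2
      + PowerSeries.X ^ 2 * L + PowerSeries.X ^ 3 = 0 := by
  subst hL
  linear_combination (-(PowerSeries.X : PowerSeries ℚ) ^ 3) * hC
end

section
/- For every natural number k, the central binomial coefficient satisfies binom(2k, k) ≤ 4^k / √(3k + 1) (as real numbers). -/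
/-- for every natural number `k`, `binom(2k, k) ≤ 4^k / √(3k+1)`. -/
theorem central_binom_le (k : ℕ) :
    (Nat.choose (2 * k) k : ℝ) ≤ 4 ^ k / Real.sqrt (3 * (k : ℝ) + 1) := by
  induction k with
  | zero => simp
  | succ k ih =>
    have hc : ∀ n : ℕ, Nat.choose (2 * n) n = Nat.centralBinom n := fun n => rfl
    rw [hc] at ih ⊢
    have key : ((k : ℝ) + 1) * Nat.centralBinom (k + 1)
        = 2 * (2 * k + 1) * Nat.centralBinom k := by
      exact_mod_cast congrArg (Nat.cast : ℕ → ℝ) (Nat.succ_mul_centralBinom_succ k)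
    have hk1 : (0:ℝ) < (k : ℝ) + 1 := by positivity
    have hs1 : (0:ℝ) < Real.sqrt (3 * (k : ℝ) + 1) := Real.sqrt_pos.mpr (by positivity)
    have hs2 : (0:ℝ) < Real.sqrt (3 * ((k : ℝ) + 1) + 1) := Real.sqrt_pos.mpr (by positivity)
    have ih' : (Nat.centralBinom k : ℝ) * Real.sqrt (3 * (k : ℝ) + 1) ≤ 4 ^ k :=
      (le_div_iff₀ hs1).mp ih
    have sqrtineq : 2 * (2 * (k:ℝ) + 1) * Real.sqrt (3 * ((k : ℝ) + 1) + 1)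
        ≤ 4 * ((k:ℝ) + 1) * Real.sqrt (3 * (k : ℝ) + 1) := by
      have h1 : 2 * (2 * (k:ℝ) + 1) * Real.sqrt (3 * ((k : ℝ) + 1) + 1)
          = Real.sqrt ((2 * (2 * (k:ℝ) + 1))^2 * (3 * ((k : ℝ) + 1) + 1)) := by
        rw [Real.sqrt_mul (by positivity), Real.sqrt_sq (by positivity)]
      have h2 : 4 * ((k:ℝ) + 1) * Real.sqrt (3 * (k : ℝ) + 1)
          = Real.sqrt ((4 * ((k:ℝ) + 1))^2 * (3 * (k : ℝ) + 1)) := by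
        rw [Real.sqrt_mul (by positivity), Real.sqrt_sq (by positivity)]
      rw [h1, h2]
      exact Real.sqrt_le_sqrt (by nlinarith [sq_nonneg ((k:ℝ))])
    push_cast
    rw [le_div_iff₀ hs2]
    rw [← mul_le_mul_iff_right₀ hk1]
    have hC : (0:ℝ) ≤ (Nat.centralBinom k : ℝ) := by positivity
    calc ((k:ℝ) + 1) * ((Nat.centralBinom (k + 1) : ℝ) * Real.sqrt (3 * ((k:ℝ) + 1) + 1))
        = (2 * (2 * (k:ℝ) + 1) * Real.sqrt (3 * ((k:ℝ) + 1) + 1)) * (Nat.centralBinom k : ℝ) := by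
          rw [← mul_assoc, key]; ring
      _ ≤ (4 * ((k:ℝ) + 1) * Real.sqrt (3 * (k : ℝ) + 1)) * (Nat.centralBinom k : ℝ) :=
          mul_le_mul_of_nonneg_right sqrtineq hC
      _ = 4 * ((k:ℝ) + 1) * ((Nat.centralBinom k : ℝ) * Real.sqrt (3 * (k : ℝ) + 1)) := by ring
      _ ≤ 4 * ((k:ℝ) + 1) * 4 ^ k := by
          apply mul_le_mul_of_nonneg_left ih' (by positivity)
      _ = ((k:ℝ) + 1) * 4 ^ (k + 1) := by ring
end
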